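/- arXiv:1905.05315 — 4 statements merged into one kernel-verified Lean document; each statement's English description precedes it below -/
import Mathlib

section
/- Let N_bs, N_rf, K be positive integers with N_rf ≤ N_bs, let α > 0, p_n > 0, let Q ∈ ℂ^{N_bs×N_bs} be Hermitian positive definite, set P = α·I_K, and let S ∈ ℂ^{K×K} be unitary (so S S* = I_K, i.e. τ = K). Define Q̄ = (αQ + p_n I_{N_bs})^{-1/2} (αQ)² (αQ + p_n I_{N_bs})^{-1/2}, and let U° ∈ ℂ^{N_bs×N_rf} be a matrix whose columns are orthonormal eigenvectors of Q̄ corresponding to its N_rf largest eigenvalues (counted with multiplicity). Then for every unitary matrix V ∈ ℂ^{N_rf×N_rf} and every diagonal matrix D ∈ ℂ^{N_rf×N_rf} with strictly positive real diagonal entries, the matrix W° = V D (U°)* satisfies f(W°) ≥ f(W) for every W ∈ ℂ^{N_rf×N_bs} of full row rank, i.e. W° maximizes the channel-estimation objective f among all (unconstrained complex-gain) analog combiners. -/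
open Matrix Kronecker ComplexOrder

/-- The channel-estimation objective
`f(W) = tr( (P S* ⊗ Q W*) [ (S P S* ⊗ W Q W*) + p_n (I_τ ⊗ W W*) ]⁻¹ (S P* ⊗ W Q*) )`. -/
noncomputable def channelObjective {K τ Nbs Nrf : ℕ} (pn : ℝ)
    (P : Matrix (Fin K) (Fin K) ℂ) (Q : Matrix (Fin Nbs) (Fin Nbs) ℂ)
    (S : Matrix (Fin τ) (Fin K) ℂ) (W : Matrix (Fin Nrf) (Fin Nbs) ℂ) : ℂ :=
  Matrix.trace (((P * Sᴴ) ⊗ₖ (Q * Wᴴ)) *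
    ((S * P * Sᴴ) ⊗ₖ (W * Q * Wᴴ) +
      (pn : ℂ) • ((1 : Matrix (Fin τ) (Fin τ) ℂ) ⊗ₖ (W * Wᴴ)))⁻¹ *
    ((S * Pᴴ) ⊗ₖ (W * Qᴴ)))

/-! With `P = αI` and `S` unitary the Kronecker structure collapses to
`f(W) = K · tr((W T Wᴴ)⁻¹ W A² Wᴴ)`, where `A = αQ` and `T = αQ + pₙI = R²`.
Substituting `W = Y Eᴴ R⁻¹` turns this trace quotient into `tr(P_Y Λ)`, where
`P_Y = Yᴴ (Y Yᴴ)⁻¹ Y` is an orthogonal projection of rank `N_rf` and `Λ` is the eigenvalue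
diagonal of `Q̄`. The diagonal entries of `P_Y` lie in `[0, 1]` and sum to `N_rf`, so the trace
is at most the sum of the `N_rf` largest eigenvalues. The quotient is invariant under `W ↦ G W`
for invertible `G`, and at `W = U°ᴴ` the bound is attained: `A` commutes with `R`, so
`A² = Q̄ T`, and `U°ᴴ Q̄ = Λ₁ U°ᴴ` with `Λ₁` the top `N_rf` eigenvalues.
-/

theorem Fin.sum_mul_le_sum_castLE {R : Type*} [CommRing R] [PartialOrder R] [IsOrderedRing R]
    {m n : ℕ} (hmn : m ≤ n) {lam : Fin n → R} (hlam : Antitone lam) {t : Fin n → R}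
    (ht0 : ∀ i, 0 ≤ t i) (ht1 : ∀ i, t i ≤ 1) (hsum : ∑ i, t i = m) :
    ∑ i, lam i * t i ≤ ∑ j : Fin m, lam (Fin.castLE hmn j) := by
  obtain rfl | hn := Nat.eq_zero_or_pos n
  · obtain rfl : m = 0 := by omega
    simp
  -- `c = lam (m - 1)` separates the top `m` entries of `lam` from the others
  set k : Fin n := ⟨m - 1, by omega⟩
  have hk : (k : ℕ) = m - 1 := rfl
  set c := lam k
  set top := Finset.univ.map (Fin.castLEEmb hmn)
  have hmem (i : Fin n) : i ∈ top ↔ (i : ℕ) < m := by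
    simp only [top, Finset.mem_map, Finset.mem_univ, true_and, Fin.castLEEmb_apply]
    exact ⟨fun ⟨j, hj⟩ => hj ▸ j.2, fun h => ⟨⟨i, h⟩, rfl⟩⟩
  have hterm (i : Fin n) : lam i * t i ≤ c * t i + if i ∈ top then lam i - c else 0 := by
    rw [← sub_le_iff_le_add', ← sub_mul]
    split_ifs with hi
    · have hle : i ≤ k := Fin.le_def.2 (by have := (hmem i).1 hi; omega)
      exact mul_le_of_le_one_right (sub_nonneg.2 (hlam hle)) (ht1 i)
    · have hge : k ≤ i := Fin.le_def.2 (by have := (hmem i).not.1 hi; omega)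
      exact mul_nonpos_of_nonpos_of_nonneg (sub_nonpos.2 (hlam hge)) (ht0 i)
  calc ∑ i, lam i * t i ≤ ∑ i, (c * t i + if i ∈ top then lam i - c else 0) :=
        Finset.sum_le_sum fun i _ => hterm i
    _ = ∑ i ∈ top, lam i := by
        rw [Finset.sum_add_distrib, ← Finset.mul_sum, hsum, ← Finset.sum_filter,
          Finset.filter_mem_eq_inter, Finset.univ_inter, Finset.sum_sub_distrib,
          Finset.sum_const, Finset.card_map, Finset.card_univ, Fintype.card_fin, nsmul_eq_mul]
        ring
    _ = ∑ j : Fin m, lam (Fin.castLE hmn j) := Finset.sum_map _ _ _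

namespace Matrix

theorem mulVec_injective_of_rank_eq_card {K m n : Type*} [Field K] [Fintype m]
    [Fintype n] {A : Matrix m n K} (h : A.rank = Fintype.card n) : Function.Injective A.mulVec := by
  rw [Matrix.mulVec_injective_iff, linearIndependent_iff_card_eq_finrank_span, ← h,
    rank_eq_finrank_span_cols, Set.finrank]

theorem isUnit_det_mul_conjTranspose_of_rank_eq_card {𝕜 m n : Type*} [RCLike 𝕜] [Fintype m]
    [Fintype n] [DecidableEq m] {Y : Matrix m n 𝕜} (hY : Y.rank = Fintype.card m) :
    IsUnit (Y * Yᴴ).det := by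
  have hinj : Function.Injective Yᴴ.mulVec :=
    mulVec_injective_of_rank_eq_card (by rw [rank_conjTranspose, hY])
  simpa using (isUnit_iff_isUnit_det _).1 (PosDef.conjTranspose_mul_self Yᴴ hinj).isUnit

open scoped MatrixOrder in
theorem trace_mul_diagonal_le_of_isStarProjection {𝕜 : Type*} [RCLike 𝕜] {m n : ℕ}
    (hmn : m ≤ n) {P : Matrix (Fin n) (Fin n) 𝕜} (hP : IsStarProjection P) (htr : P.trace = m)
    {lam : Fin n → ℝ} (hlam : Antitone lam) :
    trace (P * diagonal fun i => (lam i : 𝕜)) ≤ ∑ j : Fin m, (lam (Fin.castLE hmn j) : 𝕜) := by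
  have hdiag0 (i : Fin n) : 0 ≤ P i i := hP.nonneg.posSemidef.diag_nonneg
  have hdiag1 (i : Fin n) : P i i ≤ 1 := by
    simpa [sub_nonneg] using hP.one_sub_nonneg.posSemidef.diag_nonneg (i := i)
  simp only [trace, diag_apply, mul_diagonal, mul_comm (P _ _)] at htr ⊢
  exact Fin.sum_mul_le_sum_castLE hmn (fun i j hij => RCLike.ofReal_le_ofReal.2 (hlam hij))
    hdiag0 hdiag1 htr

variable {k m n α : Type*} [Fintype k] [Fintype m] [Fintype n] [DecidableEq m]

section CommRing

variable [CommRing α] [StarRing α]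

noncomputable def traceQuotient (B T : Matrix n n α) (W : Matrix m n α) : α :=
  trace ((W * T * Wᴴ)⁻¹ * (W * B * Wᴴ))

theorem traceQuotient_mul_left {G : Matrix m m α} (hG : IsUnit G.det) (B T : Matrix n n α)
    (W : Matrix m n α) : traceQuotient B T (G * W) = traceQuotient B T W := by
  have hGH : IsUnit Gᴴ.det := by rw [det_conjTranspose]; exact hG.star
  unfold traceQuotient
  set M := W * T * Wᴴ
  set N := W * B * Wᴴ
  have hM : G * W * T * (G * W)ᴴ = G * M * Gᴴ := by
    simp only [M, conjTranspose_mul, Matrix.mul_assoc]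
  have hN : G * W * B * (G * W)ᴴ = G * N * Gᴴ := by
    simp only [N, conjTranspose_mul, Matrix.mul_assoc]
  calc trace ((G * W * T * (G * W)ᴴ)⁻¹ * (G * W * B * (G * W)ᴴ))
      = trace (Gᴴ⁻¹ * (M⁻¹ * (G⁻¹ * G) * N * Gᴴ)) := by
        rw [hM, hN, mul_inv_rev, mul_inv_rev]; simp only [Matrix.mul_assoc]
      _ = trace (M⁻¹ * N * (Gᴴ * Gᴴ⁻¹)) := by
        rw [trace_mul_comm, nonsing_inv_mul G hG]; simp only [Matrix.mul_one, Matrix.mul_assoc]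
      _ = trace (M⁻¹ * N) := by rw [mul_nonsing_inv _ hGH, Matrix.mul_one]

theorem traceQuotient_mul_right (B T : Matrix n n α) (W : Matrix m k α) (C : Matrix k n α) :
    traceQuotient B T (W * C) = traceQuotient (C * B * Cᴴ) (C * T * Cᴴ) W := by
  simp only [traceQuotient, conjTranspose_mul, Matrix.mul_assoc]

theorem isStarProjection_conjTranspose_mul_inv_mul {Y : Matrix m n α}
    (hY : IsUnit (Y * Yᴴ).det) : IsStarProjection (Yᴴ * (Y * Yᴴ)⁻¹ * Y) where
  isIdempotentElem := by
    change _ * _ = _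
    calc Yᴴ * (Y * Yᴴ)⁻¹ * Y * (Yᴴ * (Y * Yᴴ)⁻¹ * Y)
        = Yᴴ * ((Y * Yᴴ)⁻¹ * (Y * Yᴴ)) * (Y * Yᴴ)⁻¹ * Y := by simp only [Matrix.mul_assoc]
      _ = Yᴴ * (Y * Yᴴ)⁻¹ * Y := by rw [nonsing_inv_mul _ hY, Matrix.mul_one]
  isSelfAdjoint := by
    simp only [IsSelfAdjoint, star_eq_conjTranspose, conjTranspose_mul, conjTranspose_nonsing_inv,
      conjTranspose_conjTranspose, Matrix.mul_assoc]

theorem trace_conjTranspose_mul_inv_mul {Y : Matrix m n α} (hY : IsUnit (Y * Yᴴ).det) :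
    trace (Yᴴ * (Y * Yᴴ)⁻¹ * Y) = Fintype.card m := by
  rw [trace_mul_cycle, mul_nonsing_inv _ hY, trace_one]

theorem traceQuotient_mul_self_conjTranspose_eq_sum {U : Matrix n m α} {Bbar T : Matrix n n α}
    {μ : m → α} (hU : Uᴴ * Bbar = diagonal μ * Uᴴ) (hN : IsUnit (Uᴴ * T * U).det) :
    traceQuotient (Bbar * T) T Uᴴ = ∑ i, μ i := by
  have hUBU : Uᴴ * (Bbar * T) * U = diagonal μ * (Uᴴ * T * U) := by
    rw [← Matrix.mul_assoc, hU]; simp only [Matrix.mul_assoc]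
  rw [traceQuotient, conjTranspose_conjTranspose, hUBU, trace_mul_comm, Matrix.mul_assoc,
    mul_nonsing_inv _ hN, Matrix.mul_one, trace_diagonal]

end CommRing

section Eigendecomposition

variable {𝕜 : Type*} [RCLike 𝕜] {m n : ℕ} {R E B : Matrix (Fin n) (Fin n) 𝕜} {lam : Fin n → ℝ}

theorem traceQuotient_diagonal_one_le (hmn : m ≤ n) {Y : Matrix (Fin m) (Fin n) 𝕜}
    (hY : IsUnit (Y * Yᴴ).det) (hlam : Antitone lam) :
    traceQuotient (diagonal fun i => (lam i : 𝕜)) 1 Y ≤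
      ∑ j : Fin m, (lam (Fin.castLE hmn j) : 𝕜) := by
  have hP := isStarProjection_conjTranspose_mul_inv_mul hY
  have htr : trace (Yᴴ * (Y * Yᴴ)⁻¹ * Y) = m := by
    rw [trace_conjTranspose_mul_inv_mul hY, Fintype.card_fin]
  calc traceQuotient (diagonal fun i => (lam i : 𝕜)) 1 Y
      = trace (Yᴴ * (Y * Yᴴ)⁻¹ * Y * diagonal fun i => (lam i : 𝕜)) := by
        rw [traceQuotient, Matrix.mul_one, trace_mul_comm, ← trace_mul_cycle]
        simp only [Matrix.mul_assoc]
    _ ≤ _ := trace_mul_diagonal_le_of_isStarProjection hmn hP htr hlam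

theorem traceQuotient_le_sum_castLE (hmn : m ≤ n) (hR : R.IsHermitian) (hRdet : IsUnit R.det)
    (hE : E ∈ unitaryGroup (Fin n) 𝕜)
    (hdecomp : R⁻¹ * B * R⁻¹ = E * diagonal (fun i => (lam i : 𝕜)) * Eᴴ) (hlam : Antitone lam)
    {W : Matrix (Fin m) (Fin n) 𝕜} (hW : W.rank = m) :
    traceQuotient B (R * R) W ≤ ∑ j : Fin m, (lam (Fin.castLE hmn j) : 𝕜) := by
  have hEE : Eᴴ * E = 1 := mem_unitaryGroup_iff'.1 hE
  have hEE' : E * Eᴴ = 1 := mem_unitaryGroup_iff.1 hE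
  have hRinv : (R⁻¹)ᴴ = R⁻¹ := by rw [conjTranspose_nonsing_inv, hR.eq]
  -- whiten: `W = Y C` with `C = Eᴴ R⁻¹` turns the pair `(B, R²)` into `(diagonal lam, 1)`
  set Y := W * (R * E)
  set C := Eᴴ * R⁻¹
  have hWYC : W = Y * C := by
    simp only [Y, C, Matrix.mul_assoc]
    rw [← Matrix.mul_assoc E, hEE', Matrix.one_mul, mul_nonsing_inv _ hRdet, Matrix.mul_one]
  have hCB : C * B * Cᴴ = diagonal fun i => (lam i : 𝕜) := by
    calc C * B * Cᴴ = Eᴴ * (R⁻¹ * B * R⁻¹) * E := by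
          simp only [C, conjTranspose_mul, hRinv, conjTranspose_conjTranspose, Matrix.mul_assoc]
      _ = _ := by
          rw [hdecomp]
          simp only [← Matrix.mul_assoc, hEE, Matrix.one_mul]
          rw [Matrix.mul_assoc, hEE, Matrix.mul_one]
  have hCT : C * (R * R) * Cᴴ = 1 := by
    simp only [C, conjTranspose_mul, hRinv, conjTranspose_conjTranspose, Matrix.mul_assoc]
    rw [nonsing_inv_mul_cancel_left _ _ hRdet, mul_nonsing_inv_cancel_left _ _ hRdet, hEE]
  have hY : IsUnit (Y * Yᴴ).det := by
    refine isUnit_det_mul_conjTranspose_of_rank_eq_card ?_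
    rw [show Y = W * R * E from (Matrix.mul_assoc _ _ _).symm,
      rank_mul_eq_left_of_isUnit_det _ _ (UnitaryGroup.det_isUnit ⟨E, hE⟩),
      rank_mul_eq_left_of_isUnit_det _ _ hRdet, hW, Fintype.card_fin]
  rw [hWYC, traceQuotient_mul_right, hCB, hCT]
  exact traceQuotient_diagonal_one_le hmn hY hlam

theorem traceQuotient_conjTranspose_submatrix_eq (hmn : m ≤ n) (hR : R.IsHermitian)
    (hRdet : IsUnit R.det) (hE : E ∈ unitaryGroup (Fin n) 𝕜)
    (hdecomp : R⁻¹ * B * R⁻¹ = E * diagonal (fun i => (lam i : 𝕜)) * Eᴴ) (hBR : Commute B R) :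
    traceQuotient B (R * R) (E.submatrix id (Fin.castLE hmn))ᴴ =
      ∑ j : Fin m, (lam (Fin.castLE hmn j) : 𝕜) := by
  have hEE : Eᴴ * E = 1 := mem_unitaryGroup_iff'.1 hE
  set U := E.submatrix id (Fin.castLE hmn)
  have hUU : Uᴴ * U = 1 := by
    rw [conjTranspose_submatrix, ← submatrix_mul _ _ _ _ _ Function.bijective_id, hEE,
      submatrix_one _ (Fin.castLE_injective hmn)]
  have hB : B = R⁻¹ * B * R⁻¹ * (R * R) := by
    calc B = R⁻¹ * (R * B) := (nonsing_inv_mul_cancel_left _ _ hRdet).symm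
      _ = R⁻¹ * B * R⁻¹ * (R * R) := by
        rw [← hBR.eq]
        simp only [Matrix.mul_assoc, nonsing_inv_mul_cancel_left _ _ hRdet]
  have hUB : Uᴴ * (R⁻¹ * B * R⁻¹) = diagonal (fun j => (lam (Fin.castLE hmn j) : 𝕜)) * Uᴴ := by
    rw [hdecomp, conjTranspose_submatrix, ← submatrix_id_id (E * _ * Eᴴ),
      ← submatrix_mul _ _ _ _ _ Function.bijective_id, ← Matrix.mul_assoc, ← Matrix.mul_assoc,
      hEE, Matrix.one_mul]
    ext i j
    simp [diagonal_mul]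
  have hN : IsUnit (Uᴴ * (R * R) * U).det := by
    have hrank : (Uᴴ * R).rank = Fintype.card (Fin m) := by
      rw [rank_mul_eq_left_of_isUnit_det _ _ hRdet, rank_conjTranspose,
        ← rank_conjTranspose_mul_self, hUU, rank_one]
    simpa only [conjTranspose_mul, conjTranspose_conjTranspose, hR.eq, Matrix.mul_assoc] using
      isUnit_det_mul_conjTranspose_of_rank_eq_card hrank
  rw [hB]
  exact traceQuotient_mul_self_conjTranspose_eq_sum hUB hN

end Eigendecomposition

end Matrix

theorem channelObjective_eq_mul_traceQuotient {K Nbs Nrf : ℕ} {pn α : ℝ}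
    {Q : Matrix (Fin Nbs) (Fin Nbs) ℂ} (hQ : Qᴴ = Q) {S : Matrix (Fin K) (Fin K) ℂ}
    (hS : S * Sᴴ = 1) (W : Matrix (Fin Nrf) (Fin Nbs) ℂ) :
    channelObjective pn ((α : ℂ) • 1) Q S W =
      K * traceQuotient (((α : ℂ) • Q) * ((α : ℂ) • Q)) ((α : ℂ) • Q + (pn : ℂ) • 1) W := by
  have hS' : Sᴴ * S = 1 := mul_eq_one_comm.mp hS
  have hinner : (S * ((α : ℂ) • 1) * Sᴴ) ⊗ₖ (W * Q * Wᴴ) + (pn : ℂ) • (1 ⊗ₖ (W * Wᴴ)) =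
      (1 : Matrix (Fin K) (Fin K) ℂ) ⊗ₖ (W * ((α : ℂ) • Q + (pn : ℂ) • 1) * Wᴴ) := by
    simp only [Matrix.mul_smul, Matrix.smul_mul, Matrix.mul_one, hS, Matrix.mul_add,
      Matrix.add_mul, kronecker_add, smul_kronecker, kronecker_smul]
  unfold channelObjective traceQuotient
  rw [hinner, inv_kronecker, inv_one, ← mul_kronecker_mul, ← mul_kronecker_mul, trace_kronecker,
    hQ]
  simp only [conjTranspose_smul, conjTranspose_one, Complex.star_def, Complex.conj_ofReal,
    Matrix.smul_mul, Matrix.mul_smul, Matrix.mul_one, hS', trace_smul, trace_one,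
    Fintype.card_fin, smul_eq_mul, Matrix.mul_assoc]
  rw [trace_mul_comm Q, Matrix.mul_assoc, Matrix.mul_assoc, Matrix.mul_assoc, trace_mul_comm Wᴴ]
  simp only [Matrix.mul_assoc]
  ring

theorem optimal_unconstrained_combiner_general
    (Nbs Nrf K : ℕ)
    (hle : Nrf ≤ Nbs) (α pn : ℝ)
    (Q : Matrix (Fin Nbs) (Fin Nbs) ℂ) (hQ : Q.PosDef)
    (S : Matrix (Fin K) (Fin K) ℂ) (hS : S * Sᴴ = 1)
    -- `R` is the Hermitian positive definite square root of `αQ + pₙ I`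
    (R : Matrix (Fin Nbs) (Fin Nbs) ℂ) (hR : R.PosDef)
    (hRsq : R * R = (α : ℂ) • Q + (pn : ℂ) • 1)
    -- unitary eigendecomposition of `Q̄ = R⁻¹ (αQ)² R⁻¹` with decreasing eigenvalues
    (E : Matrix (Fin Nbs) (Fin Nbs) ℂ) (hE : E ∈ Matrix.unitaryGroup (Fin Nbs) ℂ)
    (lam : Fin Nbs → ℝ) (hlam : ∀ i j : Fin Nbs, i ≤ j → lam j ≤ lam i)
    (hdecomp : R⁻¹ * (((α : ℂ) • Q) * ((α : ℂ) • Q)) * R⁻¹ =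
      E * Matrix.diagonal (fun i => (lam i : ℂ)) * Eᴴ)
    -- `U°` consists of the first `N_rf` columns of `E`: orthonormal eigenvectors
    -- of `Q̄` corresponding to its `N_rf` largest eigenvalues
    (Uo : Matrix (Fin Nbs) (Fin Nrf) ℂ)
    (hUo : Uo = Matrix.of fun i j => E i (Fin.castLE hle j))
    -- arbitrary unitary `V` and diagonal `D` with positive real diagonal entries
    (V : Matrix (Fin Nrf) (Fin Nrf) ℂ) (hV : V ∈ Matrix.unitaryGroup (Fin Nrf) ℂ)
    (d : Fin Nrf → ℝ) (hd : ∀ i, 0 < d i) :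
    ∀ W : Matrix (Fin Nrf) (Fin Nbs) ℂ, W.rank = Nrf →
      channelObjective pn ((α : ℂ) • (1 : Matrix (Fin K) (Fin K) ℂ)) Q S W ≤
        channelObjective pn ((α : ℂ) • (1 : Matrix (Fin K) (Fin K) ℂ)) Q S
          (V * Matrix.diagonal (fun i => (d i : ℂ)) * Uoᴴ) := by
  intro W hW
  have hRdet : IsUnit R.det := (isUnit_iff_isUnit_det R).1 hR.isUnit
  have hQR : Commute ((α : ℂ) • Q) R := by
    rw [show (α : ℂ) • Q = R * R - (pn : ℂ) • 1 by rw [hRsq, add_sub_cancel_right]]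
    exact ((Commute.refl R).mul_left (Commute.refl R)).sub_left ((Commute.one_left R).smul_left _)
  have hVD : IsUnit (V * diagonal fun i => (d i : ℂ)).det := by
    rw [det_mul, det_diagonal]
    exact (UnitaryGroup.det_isUnit ⟨V, hV⟩).mul
      (IsUnit.mk0 _ (Finset.prod_ne_zero_iff.2 fun i _ => by exact_mod_cast (hd i).ne'))
  have hUo' : Uo = E.submatrix id (Fin.castLE hle) := hUo
  rw [channelObjective_eq_mul_traceQuotient hQ.1 hS, channelObjective_eq_mul_traceQuotient hQ.1 hS,
    ← hRsq, traceQuotient_mul_left hVD, hUo',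
    traceQuotient_conjTranspose_submatrix_eq hle hR.1 hRdet hE hdecomp (hQR.mul_left hQR)]
  exact mul_le_mul_of_nonneg_left
    (traceQuotient_le_sum_castLE hle hR.1 hRdet hE hdecomp hlam hW) (Nat.cast_nonneg K)

/-- Theorem 1 of the paper: the unconstrained complex-gain analog combiner
`W° = V D (U°)*`, where the columns of `U°` are orthonormal eigenvectors of
`Q̄ = (αQ + pₙI)^{-1/2} (αQ)² (αQ + pₙI)^{-1/2}` corresponding to its `N_rf`
largest eigenvalues, maximizes the channel-estimation objective `f` among all
full-row-rank combiners, for every unitary `V` and every diagonal `D` with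
strictly positive real diagonal entries. Here `R` is the (unique) Hermitian
positive definite square root of `αQ + pₙI`, and `E` together with the
decreasingly sorted eigenvalue list `lam` gives a unitary eigendecomposition
of `Q̄ = R⁻¹ (αQ)² R⁻¹`. -/
theorem optimal_unconstrained_combiner
    (Nbs Nrf K : ℕ) (hNbs : 0 < Nbs) (hNrf : 0 < Nrf) (hK : 0 < K)
    (hle : Nrf ≤ Nbs) (α pn : ℝ) (hα : 0 < α) (hpn : 0 < pn)
    (Q : Matrix (Fin Nbs) (Fin Nbs) ℂ) (hQ : Q.PosDef)
    (S : Matrix (Fin K) (Fin K) ℂ) (hS : S * Sᴴ = 1)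
    -- `R` is the Hermitian positive definite square root of `αQ + pₙ I`
    (R : Matrix (Fin Nbs) (Fin Nbs) ℂ) (hR : R.PosDef)
    (hRsq : R * R = (α : ℂ) • Q + (pn : ℂ) • 1)
    -- unitary eigendecomposition of `Q̄ = R⁻¹ (αQ)² R⁻¹` with decreasing eigenvalues
    (E : Matrix (Fin Nbs) (Fin Nbs) ℂ) (hE : E ∈ Matrix.unitaryGroup (Fin Nbs) ℂ)
    (lam : Fin Nbs → ℝ) (hlam : ∀ i j : Fin Nbs, i ≤ j → lam j ≤ lam i)
    (hdecomp : R⁻¹ * (((α : ℂ) • Q) * ((α : ℂ) • Q)) * R⁻¹ =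
      E * Matrix.diagonal (fun i => (lam i : ℂ)) * Eᴴ)
    -- `U°` consists of the first `N_rf` columns of `E`: orthonormal eigenvectors
    -- of `Q̄` corresponding to its `N_rf` largest eigenvalues
    (Uo : Matrix (Fin Nbs) (Fin Nrf) ℂ)
    (hUo : Uo = Matrix.of fun i j => E i (Fin.castLE hle j))
    -- arbitrary unitary `V` and diagonal `D` with positive real diagonal entries
    (V : Matrix (Fin Nrf) (Fin Nrf) ℂ) (hV : V ∈ Matrix.unitaryGroup (Fin Nrf) ℂ)
    (d : Fin Nrf → ℝ) (hd : ∀ i, 0 < d i) :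
    ∀ W : Matrix (Fin Nrf) (Fin Nbs) ℂ, W.rank = Nrf →
      channelObjective pn ((α : ℂ) • (1 : Matrix (Fin K) (Fin K) ℂ)) Q S W ≤
        channelObjective pn ((α : ℂ) • (1 : Matrix (Fin K) (Fin K) ℂ)) Q S
          (V * Matrix.diagonal (fun i => (d i : ℂ)) * Uoᴴ) :=
  optimal_unconstrained_combiner_general Nbs Nrf K hle α pn Q hQ S hS R hR hRsq E hE lam hlam
    hdecomp Uo hUo V hV d hd
end

section
/- Let N_bs, N_rf, K, τ be positive integers with N_rf ≤ N_bs, let p_n > 0, let P ∈ ℂ^{K×K} and Q ∈ ℂ^{N_bs×N_bs} be Hermitian positive definite, and let S ∈ ℂ^{τ×K}. Then for every W ∈ ℂ^{N_rf×N_bs} of full row rank and every invertible matrix M ∈ ℂ^{N_rf×N_rf}, one has f(MW) = f(W). In particular, f(W) depends on W only through the factor Λ U* in any singular value decomposition W = V Λ U*, i.e. the objective is invariant to left multiplication of W by invertible matrices. -/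
open Matrix Kronecker ComplexOrder

/-- The objective `f` is invariant to left multiplication of the full-row-rank
combiner `W` by any invertible matrix `M`: `f(MW) = f(W)`. -/
theorem objective_left_mul_invariant
    (Nbs Nrf K τ : ℕ) (hNbs : 0 < Nbs) (hNrf : 0 < Nrf) (hK : 0 < K) (hτ : 0 < τ)
    (hle : Nrf ≤ Nbs) (pn : ℝ) (hpn : 0 < pn)
    (P : Matrix (Fin K) (Fin K) ℂ) (hP : P.PosDef)
    (Q : Matrix (Fin Nbs) (Fin Nbs) ℂ) (hQ : Q.PosDef)
    (S : Matrix (Fin τ) (Fin K) ℂ)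
    (W : Matrix (Fin Nrf) (Fin Nbs) ℂ) (hW : W.rank = Nrf)
    (M : Matrix (Fin Nrf) (Fin Nrf) ℂ) (hM : IsUnit M.det) :
    channelObjective pn P Q S (M * W) = channelObjective pn P Q S W := by
  classical
  set A : Matrix (Fin τ × Fin Nrf) (Fin τ × Fin Nrf) ℂ :=
    (1 : Matrix (Fin τ) (Fin τ) ℂ) ⊗ₖ M with hA
  set B : Matrix (Fin τ × Fin Nrf) (Fin τ × Fin Nrf) ℂ :=
    (1 : Matrix (Fin τ) (Fin τ) ℂ) ⊗ₖ Mᴴ with hB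
  have hdetA : IsUnit A.det := by
    rw [hA, Matrix.det_kronecker, Matrix.det_one, one_pow, one_mul]
    exact hM.pow _
  have hdetAstar : IsUnit B.det := by
    rw [hB, Matrix.det_kronecker, Matrix.det_one, one_pow, one_mul]
    rw [Matrix.det_conjTranspose]
    exact (hM.star).pow _
  set mid : Matrix (Fin τ × Fin Nrf) (Fin τ × Fin Nrf) ℂ :=
    (S * P * Sᴴ) ⊗ₖ (W * Q * Wᴴ) +
      (pn : ℂ) • ((1 : Matrix (Fin τ) (Fin τ) ℂ) ⊗ₖ (W * Wᴴ)) with hmid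
  have hL : (P * Sᴴ) ⊗ₖ (Q * (M * W)ᴴ) = ((P * Sᴴ) ⊗ₖ (Q * Wᴴ)) * B := by
    rw [hB, ← Matrix.mul_kronecker_mul]
    congr 1 <;> simp [Matrix.conjTranspose_mul, Matrix.mul_assoc]
  have hR : (S * Pᴴ) ⊗ₖ ((M * W) * Qᴴ) = A * ((S * Pᴴ) ⊗ₖ (W * Qᴴ)) := by
    rw [hA, ← Matrix.mul_kronecker_mul]
    congr 1 <;> simp [Matrix.mul_assoc]
  have hMid : (S * P * Sᴴ) ⊗ₖ ((M * W) * Q * (M * W)ᴴ) +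
      (pn : ℂ) • ((1 : Matrix (Fin τ) (Fin τ) ℂ) ⊗ₖ ((M * W) * (M * W)ᴴ)) =
      A * mid * B := by
    have h1 : (M * W) * Q * (M * W)ᴴ = M * (W * Q * Wᴴ) * Mᴴ := by
      rw [Matrix.conjTranspose_mul]; simp only [Matrix.mul_assoc]
    have h2 : (M * W) * (M * W)ᴴ = M * (W * Wᴴ) * Mᴴ := by
      rw [Matrix.conjTranspose_mul]; simp only [Matrix.mul_assoc]
    have h3 : (S * P * Sᴴ) = (1 : Matrix (Fin τ) (Fin τ) ℂ) * (S * P * Sᴴ) * 1 := by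
      simp
    rw [h1, h2, hmid, hA, hB, Matrix.mul_add, Matrix.add_mul]
    congr 1
    · conv_lhs => rw [h3]
      rw [← Matrix.mul_kronecker_mul, ← Matrix.mul_kronecker_mul]
    · rw [Matrix.mul_smul, Matrix.smul_mul]
      congr 1
      conv_lhs => rw [show (1 : Matrix (Fin τ) (Fin τ) ℂ) = 1 * 1 * 1 by simp]
      rw [← Matrix.mul_kronecker_mul, ← Matrix.mul_kronecker_mul]
  unfold channelObjective
  rw [hL, hR, hMid, Matrix.mul_inv_rev, Matrix.mul_inv_rev]
  simp only [Matrix.mul_assoc]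
  rw [Matrix.nonsing_inv_mul_cancel_left _ _ hdetA,
    Matrix.mul_nonsing_inv_cancel_left _ _ hdetAstar]
  rw [hmid]
  simp only [Matrix.mul_assoc]
end

section
/- Let N_bs, N_rf, K be positive integers with N_rf ≤ N_bs, let α > 0, p_n > 0, let Q ∈ ℂ^{N_bs×N_bs} be Hermitian positive definite, set P = α·I_K, and let S ∈ ℂ^{K×K} be unitary (S S* = I_K). Then for every matrix Ũ ∈ ℂ^{N_bs×N_rf} of full column rank, the objective evaluated at W = Ũ* satisfies f(Ũ*) = K · tr( Ũ* (α² Q²) Ũ · [ Ũ* (α Q + p_n I_{N_bs}) Ũ ]^{-1} ), where the inverted matrix is invertible because α Q + p_n I_{N_bs} is positive definite and Ũ has full column rank. -/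
open Matrix Kronecker ComplexOrder

/-- Step (a) of the appendix proof of Theorem 1: for `P = α I_K`, unitary
pilots `S` (with `τ = K`), and any `Ũ` of full column rank,
`f(Ũ*) = K · tr( Ũ* (α² Q²) Ũ [ Ũ* (α Q + pₙ I) Ũ ]⁻¹ )`. -/
theorem objective_reduction
    (Nbs Nrf K : ℕ) (hNbs : 0 < Nbs) (hNrf : 0 < Nrf) (hK : 0 < K)
    (hle : Nrf ≤ Nbs) (α pn : ℝ) (hα : 0 < α) (hpn : 0 < pn)
    (Q : Matrix (Fin Nbs) (Fin Nbs) ℂ) (hQ : Q.PosDef)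
    (S : Matrix (Fin K) (Fin K) ℂ) (hS : S * Sᴴ = 1)
    (U : Matrix (Fin Nbs) (Fin Nrf) ℂ) (hU : U.rank = Nrf) :
    channelObjective pn ((α : ℂ) • (1 : Matrix (Fin K) (Fin K) ℂ)) Q S Uᴴ =
      (K : ℂ) * Matrix.trace (Uᴴ * (((α : ℂ) ^ 2) • (Q * Q)) * U *
        (Uᴴ * ((α : ℂ) • Q + (pn : ℂ) • 1) * U)⁻¹) := by
  have hQH : Qᴴ = Q := hQ.1
  have hSS : Sᴴ * S = 1 := mul_eq_one_comm.mp hS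
  set M : Matrix (Fin Nrf) (Fin Nrf) ℂ := Uᴴ * ((α : ℂ) • Q + (pn : ℂ) • 1) * U with hM
  unfold channelObjective
  have h1 : ((α : ℂ) • (1 : Matrix (Fin K) (Fin K) ℂ)) * Sᴴ = (α : ℂ) • Sᴴ := by
    simp [smul_mul_assoc]
  have h2 : S * ((α : ℂ) • (1 : Matrix (Fin K) (Fin K) ℂ)) * Sᴴ = (α : ℂ) • 1 := by
    simp [mul_smul_comm, smul_mul_assoc, hS]
  have h3 : S * ((α : ℂ) • (1 : Matrix (Fin K) (Fin K) ℂ))ᴴ = (α : ℂ) • S := by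
    simp [mul_smul_comm]
  rw [h1, h2, h3, conjTranspose_conjTranspose, hQH]
  have hmid : ((α : ℂ) • (1 : Matrix (Fin K) (Fin K) ℂ)) ⊗ₖ (Uᴴ * Q * U) +
      (pn : ℂ) • ((1 : Matrix (Fin K) (Fin K) ℂ) ⊗ₖ (Uᴴ * U)) =
      (1 : Matrix (Fin K) (Fin K) ℂ) ⊗ₖ M := by
    rw [hM, Matrix.smul_kronecker, ← Matrix.kronecker_smul, ← Matrix.kronecker_smul,
      ← Matrix.kronecker_add]
    congr 1
    rw [Matrix.mul_add, Matrix.add_mul]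
    simp [mul_smul_comm, smul_mul_assoc, Matrix.mul_assoc]
  rw [hmid, Matrix.inv_kronecker, inv_one,
    ← Matrix.mul_kronecker_mul, ← Matrix.mul_kronecker_mul]
  simp only [Matrix.mul_one, smul_mul_assoc, mul_smul_comm, hSS, smul_smul]
  rw [Matrix.smul_kronecker, Matrix.trace_smul, Matrix.trace_kronecker, Matrix.trace_one]
  have key : (Q * U * M⁻¹ * (Uᴴ * Q)).trace = (Uᴴ * (Q * Q) * U * M⁻¹).trace := by
    rw [Matrix.trace_mul_comm]
    simp [Matrix.mul_assoc]
  rw [key]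
  have hend : Uᴴ * (((α : ℂ) ^ 2) • (Q * Q)) * U * M⁻¹
      = ((α : ℂ) ^ 2) • (Uᴴ * (Q * Q) * U * M⁻¹) := by
    simp [smul_mul_assoc, mul_smul_comm]
  rw [hend, Matrix.trace_smul, smul_eq_mul, smul_eq_mul, Fintype.card_fin]
  ring
end

section
/- (Lemma 1, part (10c)) Let η > 0, let W ∈ ℂ^{N_rf×N_bs}, let V ∈ ℂ^{N_rf×N_rf} be unitary, and let U ∈ ℂ^{N_bs×N_rf} have all columns nonzero. Define the diagonal matrix D̃ ∈ ℝ^{N_rf×N_rf} by (D̃)_{l,l} = max( Re( ((W* V)_{:,l})* (U)_{:,l} ) / ‖(U)_{:,l}‖² , η ) for l = 1,…,N_rf, where (·)_{:,l} denotes the l-th column. Then for every diagonal matrix D with real diagonal entries all ≥ η, ‖W − V D̃ U*‖_F ≤ ‖W − V D U*‖_F; i.e., D̃ minimizes ‖W − V D U*‖_F² over diagonal matrices whose diagonal entries are lower bounded by η. -/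
open Matrix

/-- The Frobenius norm of a complex matrix. -/
noncomputable def frobNorm {m n : ℕ} (A : Matrix (Fin m) (Fin n) ℂ) : ℝ :=
  Real.sqrt (∑ i, ∑ j, ‖A i j‖ ^ 2)

/-!
Since `V` is unitary, `‖W - V D Uᴴ‖_F = ‖Vᴴ W - D Uᴴ‖_F`, and row `l` of `Vᴴ W - D Uᴴ` involves
only the entry `d l`. The squared norm is therefore a sum of independent quadratics
`s_l t² - 2 p_l t + c_l` in `t = d l`, where `s_l = ‖U_{:,l}‖² > 0` and `p_l` is the real part
in the definition of `dtilde`. A convex quadratic with vertex `p_l / s_l` is minimised on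
`[η, ∞)` at `max (p_l / s_l) η`.
-/

section

variable {𝕜 : Type*} [RCLike 𝕜] {m n : Type*} [Fintype m] [Fintype n]

open RCLike ComplexConjugate

theorem sum_norm_sq_pos_of_ne_zero {x : n → 𝕜} (hx : x ≠ 0) : 0 < ∑ i, ‖x i‖ ^ 2 := by
  obtain ⟨i, hi⟩ := Function.ne_iff.mp hx
  exact Finset.sum_pos' (fun j _ => by positivity)
    ⟨i, Finset.mem_univ i, pow_pos (norm_pos_iff.mpr hi) 2⟩

theorem norm_sub_ofReal_mul_sq (t : ℝ) (a b : 𝕜) :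
    ‖a - t * b‖ ^ 2 = ‖a‖ ^ 2 - 2 * t * re (a * conj b) + t ^ 2 * ‖b‖ ^ 2 := by
  rw [@norm_sub_sq 𝕜, inner_apply, norm_mul, norm_ofReal, mul_pow, sq_abs, mul_assoc,
    re_ofReal_mul, ← conj_re, map_mul, conj_conj, mul_comm (conj b)]
  ring

namespace Matrix

theorem sum_norm_sq_eq_re_trace (A : Matrix m n 𝕜) :
    ∑ i, ∑ j, ‖A i j‖ ^ 2 = re (trace (Aᴴ * A)) := by
  simp only [trace, diag, mul_apply, conjTranspose_apply, RCLike.star_def, map_sum,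
    RCLike.conj_mul, ← RCLike.ofReal_pow, RCLike.ofReal_re]
  exact Finset.sum_comm

theorem sum_norm_sq_mul_of_conjTranspose_mul_eq_one [DecidableEq m] {V : Matrix m m 𝕜}
    (hV : Vᴴ * V = 1) (X : Matrix m n 𝕜) :
    ∑ i, ∑ j, ‖(V * X) i j‖ ^ 2 = ∑ i, ∑ j, ‖X i j‖ ^ 2 := by
  rw [sum_norm_sq_eq_re_trace, sum_norm_sq_eq_re_trace, conjTranspose_mul, Matrix.mul_assoc,
    ← Matrix.mul_assoc Vᴴ, hV, Matrix.one_mul]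

theorem sum_norm_sq_sub_diagonal_mul [DecidableEq m] (A B : Matrix m n 𝕜) (e : m → ℝ) :
    ∑ i, ∑ j, ‖(A - diagonal (fun i => (e i : 𝕜)) * B) i j‖ ^ 2 =
      ∑ i, ((∑ j, ‖A i j‖ ^ 2) - 2 * e i * re (∑ j, A i j * conj (B i j)) +
        e i ^ 2 * ∑ j, ‖B i j‖ ^ 2) := by
  refine Finset.sum_congr rfl fun i _ => ?_
  simp only [sub_apply, diagonal_mul, norm_sub_ofReal_mul_sq, Finset.sum_add_distrib,
    Finset.sum_sub_distrib, map_sum, Finset.mul_sum]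

end Matrix

end

theorem max_div_sq_mul_sub_le {s : ℝ} (hs : 0 < s) (p : ℝ) {η t : ℝ} (ht : η ≤ t) :
    max (p / s) η ^ 2 * s - 2 * max (p / s) η * p ≤ t ^ 2 * s - 2 * t * p := by
  rcases le_total η (p / s) with h | h
  · rw [max_eq_left h]
    have hgap : t ^ 2 * s - 2 * t * p - ((p / s) ^ 2 * s - 2 * (p / s) * p) =
        s * (t - p / s) ^ 2 := by
      field_simp
      ring
    linarith [mul_nonneg hs.le (sq_nonneg (t - p / s))]
  · rw [max_eq_right h]
    have hp : p ≤ η * s := (div_le_iff₀ hs).mp h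
    have hgap : t ^ 2 * s - 2 * t * p - (η ^ 2 * s - 2 * η * p) =
        (t - η) * ((t + η) * s - 2 * p) := by
      ring
    have hfactor : 0 ≤ (t + η) * s - 2 * p := by
      nlinarith [mul_nonneg (sub_nonneg.mpr ht) hs.le]
    linarith [mul_nonneg (sub_nonneg.mpr ht) hfactor]

theorem diagonal_update_optimal_general
    (Nbs Nrf : ℕ) (η : ℝ)
    (W : Matrix (Fin Nrf) (Fin Nbs) ℂ)
    (V : Matrix (Fin Nrf) (Fin Nrf) ℂ) (hV : V ∈ Matrix.unitaryGroup (Fin Nrf) ℂ)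
    (U : Matrix (Fin Nbs) (Fin Nrf) ℂ) (hU : ∀ l, (fun i => U i l) ≠ 0)
    (dtilde : Fin Nrf → ℝ)
    (hdtilde : ∀ l, dtilde l =
      max ((∑ i, (starRingEnd ℂ) ((Wᴴ * V) i l) * U i l).re /
            (∑ i, ‖U i l‖ ^ 2)) η) :
    ∀ d : Fin Nrf → ℝ, (∀ l, η ≤ d l) →
      frobNorm (W - V * Matrix.diagonal (fun l => (dtilde l : ℂ)) * Uᴴ) ≤
        frobNorm (W - V * Matrix.diagonal (fun l => (d l : ℂ)) * Uᴴ) := by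
  intro d hd
  have hVV : Vᴴ * V = 1 := mem_unitaryGroup_iff'.mp hV
  set p : Fin Nrf → ℝ := fun l => RCLike.re (∑ j, (Vᴴ * W) l j * starRingEnd ℂ (Uᴴ l j))
  set s : Fin Nrf → ℝ := fun l => ∑ j, ‖Uᴴ l j‖ ^ 2
  have hnorm : ∀ e : Fin Nrf → ℝ, frobNorm (W - V * diagonal (fun l => (e l : ℂ)) * Uᴴ) =
      √(∑ l, ((∑ j, ‖(Vᴴ * W) l j‖ ^ 2) - 2 * e l * p l + e l ^ 2 * s l)) := by
    intro e
    have hW : W - V * diagonal (fun l => (e l : ℂ)) * Uᴴ =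
        V * (Vᴴ * W - diagonal (fun l => (e l : ℂ)) * Uᴴ) := by
      rw [Matrix.mul_sub, ← Matrix.mul_assoc, mul_eq_one_comm.mp hVV, Matrix.one_mul,
        Matrix.mul_assoc]
    rw [frobNorm, hW, sum_norm_sq_mul_of_conjTranspose_mul_eq_one hVV]
    exact congrArg _ (sum_norm_sq_sub_diagonal_mul _ _ e)
  have hs : ∀ l, 0 < s l := fun l => by
    simpa [s, conjTranspose_apply] using sum_norm_sq_pos_of_ne_zero (hU l)
  have hdt : ∀ l, dtilde l = max (p l / s l) η := fun l => by
    have hWV : Vᴴ * W = (Wᴴ * V)ᴴ := by rw [conjTranspose_mul, conjTranspose_conjTranspose]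
    simp [hdtilde l, p, s, hWV, conjTranspose_apply]
  rw [hnorm, hnorm]
  refine Real.sqrt_le_sqrt (Finset.sum_le_sum fun l _ => ?_)
  linarith [hdt l ▸ max_div_sq_mul_sub_le (hs l) (p l) (hd l)]

/-- Lemma 1, part (10c): the diagonal matrix `D̃` with
`(D̃)_{l,l} = max( Re( ((W*V)_{:,l})* (U)_{:,l} ) / ‖(U)_{:,l}‖², η )`
minimizes `‖W − V D U*‖_F` over real diagonal matrices whose diagonal
entries are all at least `η`. -/
theorem diagonal_update_optimal
    (Nbs Nrf : ℕ) (η : ℝ) (hη : 0 < η)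
    (W : Matrix (Fin Nrf) (Fin Nbs) ℂ)
    (V : Matrix (Fin Nrf) (Fin Nrf) ℂ) (hV : V ∈ Matrix.unitaryGroup (Fin Nrf) ℂ)
    (U : Matrix (Fin Nbs) (Fin Nrf) ℂ) (hU : ∀ l, (fun i => U i l) ≠ 0)
    (dtilde : Fin Nrf → ℝ)
    (hdtilde : ∀ l, dtilde l =
      max ((∑ i, (starRingEnd ℂ) ((Wᴴ * V) i l) * U i l).re /
            (∑ i, ‖U i l‖ ^ 2)) η) :
    ∀ d : Fin Nrf → ℝ, (∀ l, η ≤ d l) →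
      frobNorm (W - V * Matrix.diagonal (fun l => (dtilde l : ℂ)) * Uᴴ) ≤
        frobNorm (W - V * Matrix.diagonal (fun l => (d l : ℂ)) * Uᴴ) :=
  diagonal_update_optimal_general Nbs Nrf η W V hV U hU dtilde hdtilde
end
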